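/- arXiv:1406.3853 — 7 statements merged into one kernel-verified Lean document; each statement's English description precedes it below -/
import Mathlib

section
/- Channel unitarity holds: the matrices R and R̄ are mutually inverse, i.e. R * R̄ = 1 and R̄ * R = 1 as matrices indexed by Fin n × Fin n over ℤ[q,q⁻¹]. Equivalently, for all a, b, c, d ∈ Fin n, Σ_{i,j ∈ Fin n} R((a,b),(i,j)) · R̄((i,j),(c,d)) = (if a = c then 1 else 0) · (if b = d then 1 else 0). -/
open LaurentPolynomial Matrix Finset

/-- The Yang-Baxter matrix `R` for a positive crossing. -/
noncomputable def Rmat (n : ℕ) : Matrix (Fin n × Fin n) (Fin n × Fin n) (LaurentPolynomial ℤ) :=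
  fun p r =>
    if p.1 = r.1 ∧ p.2 = r.2 ∧ p.1 < p.2 then T 1 - T (-1)
    else if p.1 = p.2 ∧ p.2 = r.1 ∧ r.1 = r.2 then T 1
    else if p.1 = r.2 ∧ p.2 = r.1 ∧ p.1 ≠ p.2 then 1
    else 0

/-- The Yang-Baxter matrix `R̄` for a negative crossing. -/
noncomputable def Rbar (n : ℕ) : Matrix (Fin n × Fin n) (Fin n × Fin n) (LaurentPolynomial ℤ) :=
  fun p r =>
    if p.1 = r.1 ∧ p.2 = r.2 ∧ p.2 < p.1 then T (-1) - T 1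
    else if p.1 = p.2 ∧ p.2 = r.1 ∧ r.1 = r.2 then T (-1)
    else if p.1 = r.2 ∧ p.2 = r.1 ∧ p.1 ≠ p.2 then 1
    else 0

/-- The matrix `Q` for a singular crossing. -/
noncomputable def Qmat (n : ℕ) : Matrix (Fin n × Fin n) (Fin n × Fin n) (LaurentPolynomial ℤ) :=
  fun p r =>
    if p.1 = p.2 ∧ p.2 = r.1 ∧ r.1 = r.2 then T 1 + T (-1)
    else if p.1 = r.1 ∧ p.2 = r.2 ∧ p.1 < p.2 then T 1
    else if p.1 = r.1 ∧ p.2 = r.2 ∧ p.2 < p.1 then T (-1)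
    else if p.1 = r.2 ∧ p.2 = r.1 ∧ p.1 ≠ p.2 then 1
    else 0

/-- The spin of the index `i ∈ Fin n`: the corresponding element of
`{1-n, 3-n, …, n-3, n-1}`. -/
def spin (n : ℕ) (i : Fin n) : ℤ := 2 * (i : ℤ) - ((n : ℤ) - 1)

/-- The quantum integer `[m] = q^{m-1} + q^{m-3} + ⋯ + q^{1-m}`. -/
noncomputable def qint (m : ℕ) : LaurentPolynomial ℤ :=
  ∑ k ∈ Finset.range m, T (2 * (k : ℤ) - ((m : ℤ) - 1))

lemma huv : (T 1 : LaurentPolynomial ℤ) * T (-1) = 1 := by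
  rw [← T_add]; norm_num

lemma Rmat_support (n : ℕ) (a b : Fin n) (x : Fin n × Fin n)
    (h1 : x ≠ (a, b)) (h2 : x ≠ (b, a)) : Rmat n (a, b) x = 0 := by
  simp only [Rmat]
  split_ifs with h h' h'' <;> simp_all [Prod.ext_iff]

lemma Rbar_support (n : ℕ) (a b : Fin n) (x : Fin n × Fin n)
    (h1 : x ≠ (a, b)) (h2 : x ≠ (b, a)) : Rbar n (a, b) x = 0 := by
  simp only [Rbar]
  split_ifs with h h' h'' <;> simp_all [Prod.ext_iff]

lemma Rmat_diag (n : ℕ) (a b : Fin n) (hab : a ≠ b) :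
    Rmat n (a, b) (a, b) = if a < b then T 1 - T (-1) else 0 := by
  simp [Rmat, hab]

lemma Rmat_swap (n : ℕ) (a b : Fin n) (hab : a ≠ b) :
    Rmat n (a, b) (b, a) = 1 := by
  simp [Rmat, hab, Ne.symm hab]

lemma Rbar_diag (n : ℕ) (a b : Fin n) (hab : a ≠ b) :
    Rbar n (a, b) (a, b) = if b < a then T (-1) - T 1 else 0 := by
  simp [Rbar, hab]

lemma Rbar_swap (n : ℕ) (a b : Fin n) (hab : a ≠ b) :
    Rbar n (a, b) (b, a) = 1 := by
  simp [Rbar, hab, Ne.symm hab]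

lemma Rmat_diag_eq (n : ℕ) (a : Fin n) : Rmat n (a, a) (a, a) = T 1 := by
  simp [Rmat, lt_irrefl]

lemma Rbar_diag_eq (n : ℕ) (a : Fin n) : Rbar n (a, a) (a, a) = T (-1) := by
  simp [Rbar, lt_irrefl]

lemma key1 (n : ℕ) (a b c d : Fin n) :
    ∑ x : Fin n × Fin n, Rmat n (a, b) x * Rbar n x (c, d) =
      if a = c ∧ b = d then 1 else 0 := by
  rcases eq_or_ne a b with hab | hab
  · subst hab
    rw [Finset.sum_eq_single (a, a)
      (fun x _ hx => by rw [Rmat_support n a a x hx hx, zero_mul])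
      (fun h => absurd (Finset.mem_univ _) h)]
    rw [Rmat_diag_eq]
    by_cases hc : (c, d) = (a, a)
    · have h1 : c = a := (Prod.ext_iff.mp hc).1
      have h2 : d = a := (Prod.ext_iff.mp hc).2
      simp only [h1, h2, and_self, if_true]
      rw [Rbar_diag_eq]; exact huv
    · rw [Rbar_support n a a (c, d) hc hc, mul_zero, if_neg]
      rintro ⟨rfl, rfl⟩; exact hc rfl
  · rw [Finset.sum_eq_add_of_mem (a, b) (b, a) (Finset.mem_univ _) (Finset.mem_univ _)
      (by simp [Prod.ext_iff, hab])
      (fun x _ hx => by rw [Rmat_support n a b x hx.1 hx.2, zero_mul])]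
    rw [Rmat_diag n a b hab, Rmat_swap n a b hab]
    by_cases hc1 : (c, d) = (a, b)
    · have h1 : c = a := (Prod.ext_iff.mp hc1).1
      have h2 : d = b := (Prod.ext_iff.mp hc1).2
      simp only [h1, h2, and_self, if_true]
      rw [Rbar_diag n a b hab, Rbar_swap n b a (Ne.symm hab)]
      split_ifs <;> first | exact absurd ‹b < a› (asymm ‹a < b›) | ring1
    · by_cases hc2 : (c, d) = (b, a)
      · have h1 : c = b := (Prod.ext_iff.mp hc2).1
        have h2 : d = a := (Prod.ext_iff.mp hc2).2
        simp only [h1, h2, hab, false_and, if_false]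
        rw [Rbar_swap n a b hab, Rbar_diag n b a (Ne.symm hab)]
        split_ifs <;> first | exact absurd ‹b < a› (asymm ‹a < b›) | ring1
      · rw [Rbar_support n a b (c, d) hc1 hc2, Rbar_support n b a (c, d) hc2 hc1,
          mul_zero, mul_zero, add_zero, if_neg]
        rintro ⟨rfl, rfl⟩; exact hc1 rfl

lemma key2 (n : ℕ) (a b c d : Fin n) :
    ∑ x : Fin n × Fin n, Rbar n (a, b) x * Rmat n x (c, d) =
      if a = c ∧ b = d then 1 else 0 := by
  rcases eq_or_ne a b with hab | hab
  · subst hab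
    rw [Finset.sum_eq_single (a, a)
      (fun x _ hx => by rw [Rbar_support n a a x hx hx, zero_mul])
      (fun h => absurd (Finset.mem_univ _) h)]
    rw [Rbar_diag_eq]
    by_cases hc : (c, d) = (a, a)
    · have h1 : c = a := (Prod.ext_iff.mp hc).1
      have h2 : d = a := (Prod.ext_iff.mp hc).2
      simp only [h1, h2, and_self, if_true]
      rw [Rmat_diag_eq, mul_comm]; exact huv
    · rw [Rmat_support n a a (c, d) hc hc, mul_zero, if_neg]
      rintro ⟨rfl, rfl⟩; exact hc rfl
  · rw [Finset.sum_eq_add_of_mem (a, b) (b, a) (Finset.mem_univ _) (Finset.mem_univ _)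
      (by simp [Prod.ext_iff, hab])
      (fun x _ hx => by rw [Rbar_support n a b x hx.1 hx.2, zero_mul])]
    rw [Rbar_diag n a b hab, Rbar_swap n a b hab]
    by_cases hc1 : (c, d) = (a, b)
    · have h1 : c = a := (Prod.ext_iff.mp hc1).1
      have h2 : d = b := (Prod.ext_iff.mp hc1).2
      simp only [h1, h2, and_self, if_true]
      rw [Rmat_diag n a b hab, Rmat_swap n b a (Ne.symm hab)]
      split_ifs <;> first | exact absurd ‹b < a› (asymm ‹a < b›) | ring1
    · by_cases hc2 : (c, d) = (b, a)
      · have h1 : c = b := (Prod.ext_iff.mp hc2).1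
        have h2 : d = a := (Prod.ext_iff.mp hc2).2
        simp only [h1, h2, hab, false_and, if_false]
        rw [Rmat_swap n a b hab, Rmat_diag n b a (Ne.symm hab)]
        split_ifs <;> first | exact absurd ‹b < a› (asymm ‹a < b›) | ring1
      · rw [Rmat_support n a b (c, d) hc1 hc2, Rmat_support n b a (c, d) hc2 hc1,
          mul_zero, mul_zero, add_zero, if_neg]
        rintro ⟨rfl, rfl⟩; exact hc1 rfl

/-- Channel unitarity: `R` and `R̄` are mutually inverse matrices. -/
theorem channel_unitarity (n : ℕ) (hn : 2 ≤ n) :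
    Rmat n * Rbar n = 1 ∧ Rbar n * Rmat n = 1 ∧
      ∀ a b c d : Fin n,
        ∑ i : Fin n, ∑ j : Fin n, Rmat n (a, b) (i, j) * Rbar n (i, j) (c, d) =
          (if a = c then 1 else 0) * (if b = d then 1 else 0) := by
  refine ⟨?_, ?_, ?_⟩
  · ext ⟨a, b⟩ ⟨c, d⟩
    rw [Matrix.mul_apply, key1, Matrix.one_apply]
    simp [Prod.ext_iff]
  · ext ⟨a, b⟩ ⟨c, d⟩
    rw [Matrix.mul_apply, key2, Matrix.one_apply]
    simp [Prod.ext_iff]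
  · intro a b c d
    have h := key1 n a b c d
    rw [Fintype.sum_prod_type] at h
    rw [h]
    split_ifs <;> simp_all
end

section
/- The matrices R and Q commute and their product rescales Q by q: R * Q = Q * R = q • Q, as matrices indexed by Fin n × Fin n over ℤ[q,q⁻¹]. -/
open LaurentPolynomial Matrix Finset

private lemma key1_s6 (n : ℕ) (a b : Fin n) (h : a < b) (r : Fin n × Fin n) :
    Qmat n (b, a) r = T (-1) * Qmat n (a, b) r := by
  simp only [Qmat]
  split_ifs <;>
    first
    | (exfalso; simp only [Prod.ext_iff, Prod.mk.injEq, Fin.lt_def, Fin.ext_iff, ne_eq,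
        not_and, not_lt, true_implies, not_not] at *; omega)
    | rfl
    | (rw [mul_one])
    | (rw [mul_zero])
    | (rw [← T_add]; norm_num)

private lemma key2_s6 (n : ℕ) (c d : Fin n) (h : c < d) (p : Fin n × Fin n) :
    Qmat n p (d, c) = T (-1) * Qmat n p (c, d) := by
  simp only [Qmat]
  split_ifs <;>
    first
    | (exfalso; simp only [Prod.ext_iff, Prod.mk.injEq, Fin.lt_def, Fin.ext_iff, ne_eq,
        not_and, not_lt, true_implies, not_not] at *; omega)
    | rfl
    | (rw [mul_one])
    | (rw [mul_zero])
    | (rw [← T_add]; norm_num)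


/-- `R` and `Q` commute, and `R * Q = Q * R = q • Q`. -/
theorem Rmat_mul_Qmat (n : ℕ) (hn : 2 ≤ n) :
    Rmat n * Qmat n = ((T 1 : LaurentPolynomial ℤ)) • Qmat n ∧ Qmat n * Rmat n = ((T 1 : LaurentPolynomial ℤ)) • Qmat n := by
  constructor
  · ext p r
    rw [Matrix.mul_apply, Matrix.smul_apply, smul_eq_mul]
    rcases lt_trichotomy p.1 p.2 with hlt | heq | hgt
    · have hne : p ≠ (p.2, p.1) := by
        simp only [ne_eq, Prod.ext_iff, Prod.mk.injEq, Fin.lt_def, Fin.ext_iff, not_and] at *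
        omega
      rw [← Finset.sum_subset (Finset.subset_univ ({p, (p.2, p.1)} : Finset (Fin n × Fin n)))
        (fun x _ hx => by
          have h0 : Rmat n p x = 0 := by
            simp only [Finset.mem_insert, Finset.mem_singleton, not_or] at hx
            simp only [Rmat]
            split_ifs <;>
              first
              | rfl
              | (exfalso; simp only [Prod.ext_iff, Prod.mk.injEq, Fin.lt_def, Fin.ext_iff,
                  ne_eq, not_and, not_lt, true_implies, not_not] at *; omega)
          rw [h0, zero_mul]),
        Finset.sum_pair hne]
      have h1 : Rmat n p p = T 1 - T (-1) := by
        simp only [Rmat]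
        split_ifs <;>
          first
          | rfl
          | (exfalso; simp only [Prod.ext_iff, Prod.mk.injEq, Fin.lt_def, Fin.ext_iff,
              ne_eq, not_and, not_lt, true_implies, not_not] at *; omega)
      have h2 : Rmat n p (p.2, p.1) = 1 := by
        simp only [Rmat]
        split_ifs <;>
          first
          | rfl
          | (exfalso; simp only [Prod.ext_iff, Prod.mk.injEq, Fin.lt_def, Fin.ext_iff,
              ne_eq, not_and, not_lt, true_implies, not_not] at *; omega)
      rw [h1, h2, one_mul, key1_s6 n p.1 p.2 hlt r]
      ring_nf
    · rw [Finset.sum_eq_single p (fun x _ hx => by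
        have h0 : Rmat n p x = 0 := by
          simp only [Rmat]
          split_ifs <;>
            first
            | rfl
            | (exfalso; simp only [Prod.ext_iff, Prod.mk.injEq, Fin.lt_def, Fin.ext_iff,
                ne_eq, not_and, not_lt, true_implies, not_not] at *; omega)
        rw [h0, zero_mul]) (by simp)]
      have h1 : Rmat n p p = T 1 := by
        simp only [Rmat]
        split_ifs <;>
          first
          | rfl
          | (exfalso; simp only [Prod.ext_iff, Prod.mk.injEq, Fin.lt_def, Fin.ext_iff,
              ne_eq, not_and, not_lt, true_implies, not_not] at *; omega)
      rw [h1]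
    · rw [Finset.sum_eq_single (p.2, p.1) (fun x _ hx => by
        have h0 : Rmat n p x = 0 := by
          simp only [Rmat]
          split_ifs <;>
            first
            | rfl
            | (exfalso; simp only [Prod.ext_iff, Prod.mk.injEq, Fin.lt_def, Fin.ext_iff,
                ne_eq, not_and, not_lt, true_implies, not_not] at *; omega)
        rw [h0, zero_mul]) (by simp)]
      have h2 : Rmat n p (p.2, p.1) = 1 := by
        simp only [Rmat]
        split_ifs <;>
          first
          | rfl
          | (exfalso; simp only [Prod.ext_iff, Prod.mk.injEq, Fin.lt_def, Fin.ext_iff,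
              ne_eq, not_and, not_lt, true_implies, not_not] at *; omega)
      have h3 : Qmat n p r = T (-1) * Qmat n (p.2, p.1) r := key1_s6 n p.2 p.1 hgt r
      rw [h2, one_mul, h3, ← mul_assoc, ← T_add]
      norm_num
  · ext p r
    rw [Matrix.mul_apply, Matrix.smul_apply, smul_eq_mul]
    rcases lt_trichotomy r.1 r.2 with hlt | heq | hgt
    · have hne : r ≠ (r.2, r.1) := by
        simp only [ne_eq, Prod.ext_iff, Prod.mk.injEq, Fin.lt_def, Fin.ext_iff, not_and] at *
        omega
      rw [← Finset.sum_subset (Finset.subset_univ ({r, (r.2, r.1)} : Finset (Fin n × Fin n)))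
        (fun x _ hx => by
          have h0 : Rmat n x r = 0 := by
            simp only [Finset.mem_insert, Finset.mem_singleton, not_or] at hx
            simp only [Rmat]
            split_ifs <;>
              first
              | rfl
              | (exfalso; simp only [Prod.ext_iff, Prod.mk.injEq, Fin.lt_def, Fin.ext_iff,
                  ne_eq, not_and, not_lt, true_implies, not_not] at *; omega)
          rw [h0, mul_zero]),
        Finset.sum_pair hne]
      have h1 : Rmat n r r = T 1 - T (-1) := by
        simp only [Rmat]
        split_ifs <;>
          first
          | rfl
          | (exfalso; simp only [Prod.ext_iff, Prod.mk.injEq, Fin.lt_def, Fin.ext_iff,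
              ne_eq, not_and, not_lt, true_implies, not_not] at *; omega)
      have h2 : Rmat n (r.2, r.1) r = 1 := by
        simp only [Rmat]
        split_ifs <;>
          first
          | rfl
          | (exfalso; simp only [Prod.ext_iff, Prod.mk.injEq, Fin.lt_def, Fin.ext_iff,
              ne_eq, not_and, not_lt, true_implies, not_not] at *; omega)
      rw [h1, h2, mul_one, key2_s6 n r.1 r.2 hlt p]
      ring_nf
    · rw [Finset.sum_eq_single r (fun x _ hx => by
        have h0 : Rmat n x r = 0 := by
          simp only [Rmat]
          split_ifs <;>
            first
            | rfl
            | (exfalso; simp only [Prod.ext_iff, Prod.mk.injEq, Fin.lt_def, Fin.ext_iff,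
                ne_eq, not_and, not_lt, true_implies, not_not] at *; omega)
        rw [h0, mul_zero]) (by simp)]
      have h1 : Rmat n r r = T 1 := by
        simp only [Rmat]
        split_ifs <;>
          first
          | rfl
          | (exfalso; simp only [Prod.ext_iff, Prod.mk.injEq, Fin.lt_def, Fin.ext_iff,
              ne_eq, not_and, not_lt, true_implies, not_not] at *; omega)
      rw [h1, mul_comm]
    · rw [Finset.sum_eq_single (r.2, r.1) (fun x _ hx => by
        have h0 : Rmat n x r = 0 := by
          simp only [Rmat]
          split_ifs <;>
            first
            | rfl
            | (exfalso; simp only [Prod.ext_iff, Prod.mk.injEq, Fin.lt_def, Fin.ext_iff,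
                ne_eq, not_and, not_lt, true_implies, not_not] at *; omega)
        rw [h0, mul_zero]) (by simp)]
      have h2 : Rmat n (r.2, r.1) r = 1 := by
        simp only [Rmat]
        split_ifs <;>
          first
          | rfl
          | (exfalso; simp only [Prod.ext_iff, Prod.mk.injEq, Fin.lt_def, Fin.ext_iff,
              ne_eq, not_and, not_lt, true_implies, not_not] at *; omega)
      have h3 : Qmat n p r = T (-1) * Qmat n p (r.2, r.1) := key2_s6 n r.2 r.1 hgt p
      rw [h2, mul_one, h3, ← mul_assoc, ← T_add]
      norm_num
end

section
/- The singular-crossing matrix Q satisfies the quadratic relation Q * Q = (q + q⁻¹) • Q, as matrices indexed by Fin n × Fin n over ℤ[q,q⁻¹]. (This is the matrix form of the graph skein relation stating that two stacked 4-valent vertices equal [2] times a single vertex.) -/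
open LaurentPolynomial Matrix Finset

/-- Auxiliary: off the two special columns, `Q` vanishes. -/
lemma Qmat_eq_zero {n : ℕ} {p k : Fin n × Fin n} (h1 : k ≠ p) (h2 : k ≠ (p.2, p.1)) :
    Qmat n p k = 0 := by
  obtain ⟨a, b⟩ := p; obtain ⟨x, y⟩ := k
  simp only [Qmat]
  split_ifs with c1 c2 c3 c4
  · obtain ⟨rfl, rfl, rfl⟩ := c1; exact absurd rfl h1
  · obtain ⟨rfl, rfl, -⟩ := c2; exact absurd rfl h1
  · obtain ⟨rfl, rfl, -⟩ := c3; exact absurd rfl h1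
  · obtain ⟨rfl, rfl, -⟩ := c4; exact absurd rfl h2
  · rfl

/-- The quadratic relation `Q * Q = (q + q⁻¹) • Q`. -/
theorem Qmat_sq (n : ℕ) (hn : 2 ≤ n) :
    Qmat n * Qmat n = ((T 1 + T (-1) : LaurentPolynomial ℤ)) • Qmat n := by
  refine Matrix.ext fun p r => ?_
  rw [Matrix.mul_apply, Matrix.smul_apply, smul_eq_mul]
  rw [← Finset.sum_subset (Finset.subset_univ ({p, (p.2, p.1)} : Finset (Fin n × Fin n)))
    (fun k _ hk => by
      simp only [Finset.mem_insert, Finset.mem_singleton, not_or] at hk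
      exact mul_eq_zero_of_left (Qmat_eq_zero hk.1 hk.2) _)]
  obtain ⟨a, b⟩ := p
  by_cases hd : a = b
  · subst hd
    rw [show ({((a,a):Fin n × Fin n), (a,a)} : Finset (Fin n × Fin n)) = {(a,a)} by simp,
      Finset.sum_singleton]
    have h1 : Qmat n (a, a) (a, a) = T 1 + T (-1) := by simp [Qmat]
    rw [h1]
  · rw [Finset.sum_pair (by simp [Prod.ext_iff, Ne.symm hd])]
    have hpp : Qmat n (a, b) (a, b) = if a < b then T 1 else T (-1) := by
      rcases lt_or_gt_of_ne hd with h | h <;> simp [Qmat, hd, h, asymm h]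
    have hps : Qmat n (a, b) (b, a) = 1 := by
      simp [Qmat, hd, Ne.symm hd]
    rw [hpp, hps, one_mul]
    obtain ⟨c, d⟩ := r
    by_cases hr1 : (c, d) = ((a : Fin n), b)
    · rw [Prod.mk.injEq] at hr1
      obtain ⟨rfl, rfl⟩ := hr1
      have hsp : Qmat n (d, c) (c, d) = 1 := by simp [Qmat, hd, Ne.symm hd]
      rw [hpp, hsp]
      rcases lt_or_gt_of_ne hd with h | h <;>
        · simp only [h, asymm h, if_true, ite_false, ite_true, if_false]
          rw [add_mul, ← T_add, ← T_add]
          norm_num [add_comm]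
    · by_cases hr2 : (c, d) = ((b : Fin n), a)
      · rw [Prod.mk.injEq] at hr2
        obtain ⟨rfl, rfl⟩ := hr2
        have hss : Qmat n (c, d) (c, d) = if c < d then T 1 else T (-1) := by
          rcases lt_or_gt_of_ne (Ne.symm hd) with h | h <;> simp [Qmat, hd, Ne.symm hd, h, asymm h]
        have hpr : Qmat n (d, c) (c, d) = 1 := hps
        rw [hpr, hss, mul_one, mul_one]
        rcases lt_or_gt_of_ne hd with h | h <;>
          simp [h, asymm h, not_lt_of_gt, add_comm]
      · have h1 : Qmat n (a, b) (c, d) = 0 := Qmat_eq_zero hr1 hr2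
        have h2 : Qmat n (b, a) (c, d) = 0 := Qmat_eq_zero hr2 hr1
        rw [h1, h2, mul_zero, mul_zero, add_zero]
end

section
/- Positive curl (first Reidemeister move) value: for all a, b ∈ Fin n, Σ_{i ∈ Fin n} R((a,i),(b,i)) · q^{s(i)} = q^n · (if a = b then 1 else 0). -/
open LaurentPolynomial Matrix Finset

noncomputable def gAux (n : ℕ) (j : ℕ) : LaurentPolynomial ℤ := T (2 * (j : ℤ) - (n : ℤ))

/-- The positive curl evaluates to `q^n` times the identity. -/
theorem positive_curl (n : ℕ) (hn : 2 ≤ n) (a b : Fin n) :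
    ∑ i : Fin n, Rmat n (a, i) (b, i) * T (spin n i) =
      T (n : ℤ) * (if a = b then 1 else 0) := by
  by_cases hab : a = b
  · subst hab
    rw [if_pos rfl, mul_one]
    have hR : ∀ i : Fin n, Rmat n (a, i) (a, i) * T (spin n i) =
        (fun j : ℕ => if (a : ℕ) < j then gAux n (j + 1) - gAux n j
          else if (a : ℕ) = j then gAux n (j + 1) else 0) (i : ℕ) := by
      intro i
      dsimp only
      have hg1 : T (1 : ℤ) * T (spin n i) = gAux n ((i : ℕ) + 1) := by
        rw [← T_add]; unfold gAux spin; congr 1; push_cast; ring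
      have hgm : T (-1 : ℤ) * T (spin n i) = gAux n (i : ℕ) := by
        rw [← T_add]; unfold gAux spin; congr 1; push_cast; ring
      have hdef : Rmat n (a, i) (a, i) =
          if a = a ∧ i = i ∧ a < i then T 1 - T (-1)
          else if a = i ∧ i = a ∧ a = i then T 1
          else if a = i ∧ i = a ∧ a ≠ i then 1 else 0 := rfl
      rcases lt_trichotomy a i with h | h | h
      · have h' : (a : ℕ) < (i : ℕ) := h
        rw [hdef, if_pos ⟨rfl, rfl, h⟩]
        simp only [h', if_pos]
        rw [sub_mul, hg1, hgm]
      · have h' : (a : ℕ) = (i : ℕ) := congrArg Fin.val h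
        rw [hdef, if_neg (fun hc => absurd hc.2.2 (h ▸ lt_irrefl a)),
          if_pos ⟨h, h.symm, h⟩]
        rw [if_neg (show ¬((a : ℕ) < (i : ℕ)) by omega), if_pos h']
        exact hg1
      · have h' : (i : ℕ) < (a : ℕ) := h
        rw [hdef, if_neg (fun hc => lt_asymm h hc.2.2),
          if_neg (fun hc => h.ne' hc.1), if_neg (fun hc => h.ne' hc.1)]
        simp only [show ¬((a : ℕ) < (i : ℕ)) by omega, if_false,
          show ¬((a : ℕ) = (i : ℕ)) by omega, zero_mul]
    rw [Finset.sum_congr rfl (fun i _ => hR i),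
      Fin.sum_univ_eq_sum_range (fun j : ℕ => if (a : ℕ) < j then gAux n (j + 1) - gAux n j
          else if (a : ℕ) = j then gAux n (j + 1) else 0) n]
    have ha1 : (a : ℕ) + 1 ≤ n := a.2
    rw [← Finset.sum_range_add_sum_Ico _ ha1]
    have hleft : ∑ j ∈ Finset.range ((a : ℕ) + 1),
        (if (a : ℕ) < j then gAux n (j + 1) - gAux n j
          else if (a : ℕ) = j then gAux n (j + 1) else 0) = gAux n ((a : ℕ) + 1) := by
      rw [Finset.sum_range_succ, if_neg (lt_irrefl _), if_pos rfl]
      rw [Finset.sum_eq_zero, zero_add]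
      intro j hj
      rw [Finset.mem_range] at hj
      rw [if_neg (by omega), if_neg (by omega)]
    have hright : ∑ j ∈ Finset.Ico ((a : ℕ) + 1) n,
        (if (a : ℕ) < j then gAux n (j + 1) - gAux n j
          else if (a : ℕ) = j then gAux n (j + 1) else 0) =
        gAux n n - gAux n ((a : ℕ) + 1) := by
      rw [Finset.sum_congr rfl (fun j hj => ?_), Finset.sum_Ico_eq_sub _ ha1,
        Finset.sum_range_sub (gAux n), Finset.sum_range_sub (gAux n)]
      · ring
      · rw [Finset.mem_Ico] at hj
        rw [if_pos (by omega)]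
    rw [hleft, hright]
    have hgn : gAux n n = T (n : ℤ) := by unfold gAux; congr 1; ring
    rw [← hgn]; ring
  · rw [if_neg hab, mul_zero]
    apply Finset.sum_eq_zero
    intro i _
    simp only [Rmat]
    split_ifs with h1 h2 h3
    · exact absurd h1.1 hab
    · exact absurd (h2.1.trans h2.2.1) hab
    · exact absurd h3.1 h3.2.2
    · exact zero_mul _
end

section
/- Negative curl (first Reidemeister move) value: for all a, b ∈ Fin n, Σ_{i ∈ Fin n} R̄((a,i),(b,i)) · q^{s(i)} = q^{−n} · (if a = b then 1 else 0). -/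
open LaurentPolynomial Matrix Finset

/-- The negative curl evaluates to `q^{-n}` times the identity. -/
theorem negative_curl (n : ℕ) (hn : 2 ≤ n) (a b : Fin n) :
    ∑ i : Fin n, Rbar n (a, i) (b, i) * T (spin n i) =
      T (-(n : ℤ)) * (if a = b then 1 else 0) := by
  rcases eq_or_ne a b with rfl | hab
  · rw [if_pos rfl, mul_one]
    have hterm : ∀ i : Fin n, Rbar n (a, i) (a, i) * T (spin n i) =
        (if (i : ℕ) < (a : ℕ) then T (2*(i:ℤ) - n) - T (2*(i:ℤ) + 2 - n)
         else if (i : ℕ) = (a : ℕ) then T (2*(a:ℤ) - n) else 0) := by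
      intro i
      simp only [Rbar, spin]
      rcases lt_trichotomy i a with h | h | h
      · rw [if_pos ⟨trivial, trivial, h⟩, if_pos (Fin.lt_iff_val_lt_val.mp h)]
        rw [sub_mul, ← T_add, ← T_add]
        rw [show (-1 : ℤ) + (2 * (i:ℤ) - ((n:ℤ) - 1)) = 2*(i:ℤ) - n by ring,
          show (1 : ℤ) + (2 * (i:ℤ) - ((n:ℤ) - 1)) = 2*(i:ℤ) + 2 - n by ring]
      · have hz : (i:ℤ) = (a:ℤ) := by exact_mod_cast congrArg Fin.val h
        rw [if_neg (by simp [h, lt_irrefl]), if_pos ⟨h.symm, h, h.symm⟩,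
          if_neg (by omega), if_pos (by exact_mod_cast hz), ← T_add]
        rw [show (-1 : ℤ) + (2 * (i:ℤ) - ((n:ℤ) - 1)) = 2*(a:ℤ) - n by omega]
      · have h2 : a ≠ i := Fin.ne_of_lt h
        have hv : (a:ℕ) < (i:ℕ) := h
        rw [if_neg (by simp [not_lt.mpr h.le]), if_neg (fun hc => h2 hc.1),
          if_neg (fun hc => h2 hc.1),
          if_neg (by omega : ¬(i:ℕ) < (a:ℕ)), if_neg (by omega : ¬(i:ℕ) = (a:ℕ)), zero_mul]
    rw [Finset.sum_congr rfl (fun i _ => hterm i)]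
    rw [Fin.sum_univ_eq_sum_range
      (fun k => if k < (a:ℕ) then T (2*(k:ℤ) - n) - T (2*(k:ℤ) + 2 - n)
        else if k = (a:ℕ) then T (2*(a:ℤ) - (n:ℤ)) else 0)]
    have ha : (a:ℕ) + 1 ≤ n := a.2
    rw [← Finset.sum_subset (Finset.range_subset_range.mpr ha) (fun x _ hx => by
      simp only [Finset.mem_range, not_lt] at hx
      rw [if_neg (by omega), if_neg (by omega)])]
    rw [Finset.sum_range_succ, if_neg (by omega), if_pos rfl]
    have htel : ∑ k ∈ Finset.range (a:ℕ),
        (if k < (a:ℕ) then T (2*(k:ℤ) - n) - T (2*(k:ℤ) + 2 - n)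
          else if k = (a:ℕ) then T (2*(a:ℤ) - (n:ℤ)) else 0) =
        ∑ k ∈ Finset.range (a:ℕ),
          ((fun m : ℕ => (T (2*(m:ℤ) - n) : LaurentPolynomial ℤ)) k -
           (fun m : ℕ => (T (2*(m:ℤ) - n) : LaurentPolynomial ℤ)) (k+1)) := by
      refine Finset.sum_congr rfl fun k hk => ?_
      rw [if_pos (Finset.mem_range.mp hk)]
      congr 2
    rw [htel, Finset.sum_range_sub']
    rw [show 2*((0:ℕ):ℤ) - (n:ℤ) = -(n:ℤ) by push_cast; ring]
    ring
  · rw [if_neg hab, mul_zero]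
    refine Finset.sum_eq_zero fun i _ => ?_
    simp only [Rbar]
    rw [if_neg (fun hc => hab hc.1), if_neg (fun hc => hab (hc.1.trans hc.2.1)),
      if_neg (fun hc => hc.2.2 hc.1), zero_mul]
end

section
/- Singular curl value (matrix form of the graph skein relation for a 4-valent vertex with a curl): for all a, b ∈ Fin n, Σ_{i ∈ Fin n} Q((a,i),(b,i)) · q^{s(i)} = [n+1] · (if a = b then 1 else 0), where [n+1] is the quantum integer. -/
open LaurentPolynomial Matrix Finset

theorem Finset.sum_range_succ_eq_sum_ite_le_add_ite_ge {M : Type*} [AddCommMonoid M]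
    (f : ℕ → M) {a n : ℕ} (ha : a < n) :
    ∑ k ∈ range (n + 1), f k =
      ∑ i ∈ range n, ((if a ≤ i then f (i + 1) else 0) + if i ≤ a then f i else 0) := by
  induction n, ha using Nat.le_induction with
  | base =>
    have below : ∀ i ∈ range a,
        ((if a ≤ i then f (i + 1) else 0) + if i ≤ a then f i else 0) = f i := fun i hi => by
      rw [mem_range] at hi
      rw [if_neg hi.not_ge, if_pos hi.le, zero_add]
    rw [sum_range_succ, sum_range_succ, sum_range_succ _ a, sum_congr rfl below,
      if_pos le_rfl, if_pos le_rfl, add_assoc, add_comm (f (a + 1))]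
  | succ n han ih =>
    rw [sum_range_succ, ih, sum_range_succ _ n, if_pos (by omega), if_neg (by omega), add_zero]

theorem Qmat_diag_apply (n : ℕ) (a i : Fin n) :
    Qmat n (a, i) (a, i) = (if a ≤ i then T 1 else 0) + if i ≤ a then T (-1) else 0 := by
  rcases lt_trichotomy a i with h | rfl | h
  · simp [Qmat, h, h.ne, h.ne', h.le, not_le.mpr h]
  · simp [Qmat]
  · simp [Qmat, h, h.ne, h.ne', h.le, not_le.mpr h]

theorem Qmat_apply_of_ne (n : ℕ) {a b : Fin n} (hab : a ≠ b) (i : Fin n) :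
    Qmat n (a, i) (b, i) = 0 := by
  simp only [Qmat]
  split_ifs <;> grind

theorem qint_succ_eq_sum_spin (n : ℕ) (a : Fin n) :
    qint (n + 1) = ∑ i : Fin n,
      ((if a ≤ i then T (spin n i + 1) else 0) + if i ≤ a then T (spin n i - 1) else 0) := by
  rw [qint, sum_range_succ_eq_sum_ite_le_add_ite_ge _ a.isLt,
    ← Fin.sum_univ_eq_sum_range]
  refine sum_congr rfl fun i _ => ?_
  simp only [Fin.le_def, spin]
  congr 2 <;> congr 1 <;> push_cast <;> ring

theorem singular_curl_general (n : ℕ) (a b : Fin n) :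
    ∑ i : Fin n, Qmat n (a, i) (b, i) * T (spin n i) =
      qint (n + 1) * (if a = b then 1 else 0) := by
  rcases eq_or_ne a b with rfl | hab
  · rw [if_pos rfl, mul_one, qint_succ_eq_sum_spin n a]
    refine sum_congr rfl fun i _ => ?_
    rw [Qmat_diag_apply, add_mul, ite_mul, ite_mul, zero_mul, ← T_add, ← T_add,
      add_comm 1, neg_add_eq_sub]
  · simp [Qmat_apply_of_ne n hab, hab]

/-- The singular curl evaluates to the quantum integer `[n+1]` times the identity. -/
theorem singular_curl (n : ℕ) (hn : 2 ≤ n) (a b : Fin n) :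
    ∑ i : Fin n, Qmat n (a, i) (b, i) * T (spin n i) =
      qint (n + 1) * (if a = b then 1 else 0) :=
  singular_curl_general n a b
end

section
/- Braid relation for the representation of the braid group inside the singular braid monoid: (R ⊗ I)·(I ⊗ R)·(R ⊗ I) = (I ⊗ R)·(R ⊗ I)·(I ⊗ R), where I is the n×n identity matrix, ⊗ is the Kronecker product of matrices (so both sides are matrices indexed by (Fin n × Fin n) × Fin n), and · is matrix multiplication. -/
open LaurentPolynomial Matrix Finset

/-- `R ⊗ I`, as a matrix indexed by `(Fin n × Fin n) × Fin n`. -/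
noncomputable def RI (n : ℕ) :
    Matrix ((Fin n × Fin n) × Fin n) ((Fin n × Fin n) × Fin n) (LaurentPolynomial ℤ) :=
  Matrix.kronecker (Rmat n) (1 : Matrix (Fin n) (Fin n) (LaurentPolynomial ℤ))

/-- `I ⊗ R`, reindexed so that it is also a matrix indexed by `(Fin n × Fin n) × Fin n`. -/
noncomputable def IR (n : ℕ) :
    Matrix ((Fin n × Fin n) × Fin n) ((Fin n × Fin n) × Fin n) (LaurentPolynomial ℤ) :=
  Matrix.reindex (Equiv.prodAssoc (Fin n) (Fin n) (Fin n)).symm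
    (Equiv.prodAssoc (Fin n) (Fin n) (Fin n)).symm
    (Matrix.kronecker (1 : Matrix (Fin n) (Fin n) (LaurentPolynomial ℤ)) (Rmat n))

noncomputable def cc1 {n : ℕ} (a b : Fin n) : LaurentPolynomial ℤ :=
  if a < b then T 1 - T (-1) else if a = b then T 1 else 0

noncomputable def cc2 {n : ℕ} (a b : Fin n) : LaurentPolynomial ℤ :=
  if a = b then 0 else 1

lemma cc1_lt {n : ℕ} {a b : Fin n} (h : a < b) : cc1 a b = T 1 - T (-1) := by
  simp [cc1, h]

lemma cc1_self {n : ℕ} (a : Fin n) : cc1 a a = T 1 := by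
  simp [cc1]

lemma cc1_gt {n : ℕ} {a b : Fin n} (h : b < a) : cc1 a b = 0 := by
  rw [cc1, if_neg (by omega), if_neg (by omega)]

lemma cc2_self {n : ℕ} (a : Fin n) : cc2 a a = 0 := by simp [cc2]

lemma cc2_ne {n : ℕ} {a b : Fin n} (h : a ≠ b) : cc2 a b = 1 := by simp [cc2, h]

lemma Rmat_row {n : ℕ} (a b : Fin n) (z : Fin n × Fin n) :
    Rmat n (a, b) z =
      cc1 a b * (if z = (a, b) then 1 else 0) + cc2 a b * (if z = (b, a) then 1 else 0) := by
  obtain ⟨x, y⟩ := z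
  simp only [Rmat, cc1, cc2, Prod.mk.injEq]
  split_ifs <;> first | ring1 | (exfalso; omega)

lemma RI_apply {n : ℕ} (a b c : Fin n) (z : (Fin n × Fin n) × Fin n) :
    RI n ((a, b), c) z =
      cc1 a b * (if z = ((a, b), c) then 1 else 0) +
      cc2 a b * (if z = ((b, a), c) then 1 else 0) := by
  obtain ⟨⟨x, y⟩, w⟩ := z
  by_cases hw : c = w
  · subst hw
    simp [RI, Matrix.one_apply, Rmat_row, Prod.ext_iff]
  · simp [RI, Matrix.one_apply, Rmat_row, Prod.ext_iff, hw, Ne.symm hw]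

lemma IR_apply {n : ℕ} (a b c : Fin n) (z : (Fin n × Fin n) × Fin n) :
    IR n ((a, b), c) z =
      cc1 b c * (if z = ((a, b), c) then 1 else 0) +
      cc2 b c * (if z = ((a, c), b) then 1 else 0) := by
  obtain ⟨⟨x, y⟩, w⟩ := z
  by_cases hx : a = x
  · subst hx
    simp [IR, Matrix.one_apply, Rmat_row, Prod.ext_iff]
  · simp [IR, Matrix.one_apply, Rmat_row, Prod.ext_iff, hx, Ne.symm hx]

lemma RI_mul {n : ℕ} (M : Matrix ((Fin n × Fin n) × Fin n) ((Fin n × Fin n) × Fin n)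
    (LaurentPolynomial ℤ)) (a b c : Fin n) (y : (Fin n × Fin n) × Fin n) :
    (RI n * M) ((a, b), c) y = cc1 a b * M ((a, b), c) y + cc2 a b * M ((b, a), c) y := by
  simp only [Matrix.mul_apply, RI_apply, add_mul, mul_ite, ite_mul, one_mul, zero_mul,
    mul_zero, mul_one, Finset.sum_add_distrib, Finset.sum_ite_eq', Finset.mem_univ, if_true]

lemma IR_mul {n : ℕ} (M : Matrix ((Fin n × Fin n) × Fin n) ((Fin n × Fin n) × Fin n)
    (LaurentPolynomial ℤ)) (a b c : Fin n) (y : (Fin n × Fin n) × Fin n) :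
    (IR n * M) ((a, b), c) y = cc1 b c * M ((a, b), c) y + cc2 b c * M ((a, c), b) y := by
  simp only [Matrix.mul_apply, IR_apply, add_mul, mul_ite, ite_mul, one_mul, zero_mul,
    mul_zero, mul_one, Finset.sum_add_distrib, Finset.sum_ite_eq', Finset.mem_univ, if_true]

/-- The braid relation `(R ⊗ I)(I ⊗ R)(R ⊗ I) = (I ⊗ R)(R ⊗ I)(I ⊗ R)`. -/
theorem braid_relation (n : ℕ) (hn : 2 ≤ n) :
    RI n * IR n * RI n = IR n * RI n * IR n := by
  have huv : (T 1 : LaurentPolynomial ℤ) * T (-1) = 1 := by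
    rw [← T_add]; norm_num
  apply Matrix.ext
  rintro ⟨⟨a, b⟩, c⟩ y
  rw [Matrix.mul_assoc, Matrix.mul_assoc]
  simp only [RI_mul, IR_mul, RI_apply, IR_apply]
  rcases lt_trichotomy a b with hab | hab | hab
  · rcases lt_trichotomy b c with hbc | hbc | hbc
    · have hac := hab.trans hbc
      simp only [cc1_lt hab, cc1_lt hbc, cc1_lt hac, cc1_gt hab, cc1_gt hbc, cc1_gt hac,
        cc2_ne hab.ne, cc2_ne hbc.ne, cc2_ne hac.ne, cc2_ne hab.ne', cc2_ne hbc.ne',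
        cc2_ne hac.ne']
      ring
    · subst hbc
      simp only [cc1_lt hab, cc1_gt hab, cc1_self, cc2_self,
        cc2_ne hab.ne, cc2_ne hab.ne']
      linear_combination ((-(T 1 - T (-1)) * (if y = ((a, b), b) then 1 else 0) : LaurentPolynomial ℤ)) * huv
    · rcases lt_trichotomy a c with hac | hac | hac
      · simp only [cc1_lt hab, cc1_lt hac, cc1_lt hbc, cc1_gt hab, cc1_gt hbc, cc1_gt hac,
          cc2_ne hab.ne, cc2_ne hbc.ne', cc2_ne hac.ne, cc2_ne hab.ne', cc2_ne hbc.ne,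
          cc2_ne hac.ne']
        ring
      · subst hac
        simp only [cc1_lt hab, cc1_gt hab, cc1_lt hbc, cc1_gt hbc, cc1_self, cc2_self,
          cc2_ne hab.ne, cc2_ne hab.ne']
        ring
      · simp only [cc1_lt hab, cc1_gt hab, cc1_lt hbc, cc1_gt hbc, cc1_gt hac, cc1_lt hac,
          cc2_ne hab.ne, cc2_ne hbc.ne', cc2_ne hac.ne', cc2_ne hab.ne', cc2_ne hbc.ne,
          cc2_ne hac.ne]
        ring
  · subst hab
    rcases lt_trichotomy a c with hac | hac | hac
    · simp only [cc1_lt hac, cc1_gt hac, cc1_self, cc2_self, cc2_ne hac.ne, cc2_ne hac.ne']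
      linear_combination (((T 1 - T (-1)) * (if y = ((a, a), c) then 1 else 0) : LaurentPolynomial ℤ)) * huv
    · subst hac
      simp only [cc1_self, cc2_self]
    · simp only [cc1_lt hac, cc1_gt hac, cc1_self, cc2_self, cc2_ne hac.ne, cc2_ne hac.ne']
      ring
  · rcases lt_trichotomy b c with hbc | hbc | hbc
    · rcases lt_trichotomy a c with hac | hac | hac
      · simp only [cc1_lt hbc, cc1_lt hac, cc1_gt hab, cc1_lt hab, cc1_gt hbc, cc1_gt hac,
          cc2_ne hab.ne, cc2_ne hbc.ne, cc2_ne hac.ne, cc2_ne hab.ne', cc2_ne hbc.ne',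
          cc2_ne hac.ne']
        ring
      · subst hac
        simp only [cc1_lt hbc, cc1_gt hbc, cc1_gt hab, cc1_lt hab, cc1_self, cc2_self,
          cc2_ne hbc.ne, cc2_ne hbc.ne']
        ring
      · simp only [cc1_lt hbc, cc1_gt hbc, cc1_gt hab, cc1_lt hab, cc1_gt hac, cc1_lt hac,
          cc2_ne hab.ne, cc2_ne hbc.ne, cc2_ne hac.ne, cc2_ne hab.ne', cc2_ne hbc.ne',
          cc2_ne hac.ne']
        ring
    · subst hbc
      simp only [cc1_gt hab, cc1_lt hab, cc1_self, cc2_self, cc2_ne hab.ne, cc2_ne hab.ne']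
      ring
    · have hac := hbc.trans hab
      simp only [cc1_gt hab, cc1_lt hab, cc1_gt hbc, cc1_lt hbc, cc1_gt hac, cc1_lt hac,
        cc2_ne hab.ne, cc2_ne hbc.ne, cc2_ne hac.ne, cc2_ne hab.ne', cc2_ne hbc.ne',
        cc2_ne hac.ne']
      ring
end
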